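/- Let (M, ω, θ) be an LCS manifold with a twisted Hamiltonian action of a connected Lie group G with momentum mapping μ, and let ξ ∈ 𝔤* be a regular value. For x ∈ μ⁻¹(ξ), the ω-orthogonal of the tangent space of the level set is (T_x μ⁻¹(ξ))^ω = { X_a + ξ(a) θ^ω : a ∈ 𝔤 }. -/

import Mathlib

/-! On the level set `μ = ξ` the twisted Hamiltonian equation `d ρ_a - ρ_a θ = i_{X_a} ω` reads
`d ρ_a = ω(X_a + ξ(a) θ^ω, ·)`, so `T_x μ⁻¹(ξ) = ker d_x μ` is the `ω`-orthogonal of the image of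
`a ↦ X_a + ξ(a) θ^ω`. Since `ω_x` is nondegenerate and skew (hence reflexive) on a
finite-dimensional space, taking the `ω`-orthogonal once more gives back that image. -/

open scoped Manifold

section

variable {E : Type*} [NormedAddCommGroup E] [NormedSpace ℝ E]
  {F : Type*} [NormedAddCommGroup F] [NormedSpace ℝ F]
  {HM : Type*} [TopologicalSpace HM] {HG : Type*} [TopologicalSpace HG]
  (I : ModelWithCorners ℝ E HM) (IG : ModelWithCorners ℝ F HG)
  {M : Type*} [TopologicalSpace M] [ChartedSpace HM M]
  {G : Type*} [TopologicalSpace G] [ChartedSpace HG G] [Group G]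

/-- The exterior derivative of a `1`-form (antisymmetrized manifold derivative). -/
noncomputable def extDerivOne (θ : M → E →L[ℝ] ℝ) (x : M) (u v : E) : ℝ :=
  (show E →L[ℝ] ℝ from mfderiv I 𝓘(ℝ, E →L[ℝ] ℝ) θ x u) v -
    (show E →L[ℝ] ℝ from mfderiv I 𝓘(ℝ, E →L[ℝ] ℝ) θ x v) u

/-- The exterior derivative of a `2`-form (antisymmetrized manifold derivative). -/
noncomputable def extDerivTwo (ω : M → E →L[ℝ] E →L[ℝ] ℝ) (x : M) (u v w : E) : ℝ :=
  (show E →L[ℝ] E →L[ℝ] ℝ from mfderiv I 𝓘(ℝ, E →L[ℝ] E →L[ℝ] ℝ) ω x u) v w -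
    (show E →L[ℝ] E →L[ℝ] ℝ from mfderiv I 𝓘(ℝ, E →L[ℝ] E →L[ℝ] ℝ) ω x v) u w +
    (show E →L[ℝ] E →L[ℝ] ℝ from mfderiv I 𝓘(ℝ, E →L[ℝ] E →L[ℝ] ℝ) ω x w) u v

variable [MulAction G M]

/-- The fundamental vector field of `a ∈ 𝔤 = T₁ G` on `M`. -/
noncomputable def fundField (a : TangentSpace IG (1 : G)) (x : M) : TangentSpace I x :=
  mfderiv IG I (fun g : G => g • x) (1 : G) a

theorem LinearMap.isRefl_of_forall_eq_neg {R V : Type*} [CommRing R] [AddCommGroup V]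
    [Module R V] {B : LinearMap.BilinForm R V} (h : ∀ u v, B u v = -B v u) : B.IsRefl :=
  fun u v huv => by rw [h, huv, neg_zero]

theorem LinearMap.BilinForm.mem_orthogonal_range_iff {K V W : Type*} [Field K] [AddCommGroup V]
    [Module K V] [AddCommGroup W] [Module K W] {B : LinearMap.BilinForm K V} {Y : W →ₗ[K] V}
    {v : V} : v ∈ B.orthogonal (LinearMap.range Y) ↔ ∀ a, B (Y a) v = 0 := by
  simp only [LinearMap.BilinForm.mem_orthogonal_iff, LinearMap.mem_range, forall_exists_index,
    forall_apply_eq_imp_iff]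

theorem LinearMap.BilinForm.setOf_orthogonal_common_ker_eq_range {K V W : Type*} [Field K]
    [AddCommGroup V] [Module K V] [FiniteDimensional K V] [AddCommGroup W] [Module K W]
    {B : LinearMap.BilinForm K V} (hB : B.Nondegenerate) (hB₀ : B.IsRefl) (Y : W →ₗ[K] V) :
    {u | ∀ v, (∀ a, B (Y a) v = 0) → B u v = 0} = Set.range Y := by
  ext u
  rw [Set.mem_ofPred_eq, ← LinearMap.coe_range, SetLike.mem_coe,
    ← B.orthogonal_orthogonal hB hB₀ (LinearMap.range Y), LinearMap.BilinForm.mem_orthogonal_iff]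
  simp only [LinearMap.BilinForm.mem_orthogonal_range_iff]
  exact forall_congr' fun v => imp_congr_right fun _ => ⟨hB₀ u v, hB₀ v u⟩

noncomputable def twistedFundField (ξ : F →ₗ[ℝ] ℝ) (θω : M → E) (x : M) : F →ₗ[ℝ] E :=
  (show F →L[ℝ] E from mfderiv IG I (fun g : G => g • x) (1 : G)).toLinearMap + ξ.smulRight (θω x)

theorem twistedFundField_apply (ξ : F →ₗ[ℝ] ℝ) (θω : M → E) (x : M) (a : F) :
    twistedFundField I IG (G := G) ξ θω x a
      = (show E from fundField I IG (G := G) a x) + ξ a • θω x :=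
  rfl

theorem mfderiv_eq_omega_twistedFundField {ω : M → E →L[ℝ] E →L[ℝ] ℝ} {θ : M → E →L[ℝ] ℝ}
    {ρ : F → M → ℝ} {θω : M → E} {ξ : F →ₗ[ℝ] ℝ} {x : M}
    (hρ : ∀ (a : F) (v : E), (show E →L[ℝ] ℝ from mfderiv I 𝓘(ℝ, ℝ) (ρ a) x) v - ρ a x * θ x v
      = ω x (fundField I IG (G := G) a x) v)
    (hθω : ∀ v, ω x (θω x) v = θ x v) (hx : ∀ a, ρ a x = ξ a) (a : F) (v : E) :
    (show E →L[ℝ] ℝ from mfderiv I 𝓘(ℝ, ℝ) (ρ a) x) v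
      = ω x (twistedFundField I IG (G := G) ξ θω x a) v := by
  rw [twistedFundField_apply, map_add, map_smul, add_apply,
    smul_apply, hθω, smul_eq_mul, ← hρ a v, hx]
  ring

theorem level_set_omega_orthogonal
    [FiniteDimensional ℝ E]
    (ω : M → E →L[ℝ] E →L[ℝ] ℝ) (θ : M → E →L[ℝ] ℝ)
    (halt : ∀ x u v, ω x u v = - ω x v u)
    (hnondeg : ∀ (x : M) (u : E), (∀ v, ω x u v = 0) → u = 0)
    -- the twisted Hamiltonian structure and the momentum mapping `μ(x)(a) = ρ_a(x)` :
    (ρ : F → M → ℝ)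
    (hρ : ∀ (a : F) (x : M) (v : E),
      (show E →L[ℝ] ℝ from mfderiv I 𝓘(ℝ, ℝ) (ρ a) x) v - ρ a x * θ x v
        = ω x (fundField I IG (G := G) a x) v)
    -- the `ω`-dual (s-Lee) vector field `θ^ω` :
    (θω : M → E)
    (hθω : ∀ x v, ω x (θω x) v = θ x v)
    -- a regular value `ξ ∈ 𝔤*` of `μ` :
    (ξ : F →ₗ[ℝ] ℝ) :
    ∀ x : M, (∀ a : F, ρ a x = ξ a) →
      {u : E | ∀ v : E,
          (∀ a : F, (show E →L[ℝ] ℝ from mfderiv I 𝓘(ℝ, ℝ) (ρ a) x) v = 0) → ω x u v = 0}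
        = {u : E | ∃ a : F, u = (show E from fundField I IG (G := G) a x) + ξ a • θω x} := by
  intro x hx
  let B : LinearMap.BilinForm ℝ E := (ω x).toLinearMap₁₂
  have hB₀ : B.IsRefl := LinearMap.isRefl_of_forall_eq_neg (halt x)
  have hB : B.Nondegenerate := hB₀.nondegenerate_iff_separatingLeft.2 (hnondeg x)
  simp_rw [mfderiv_eq_omega_twistedFundField I IG (fun a => hρ a x) (hθω x) hx]
  refine (B.setOf_orthogonal_common_ker_eq_range hB hB₀
    (twistedFundField I IG (G := G) ξ θω x)).trans ?_
  ext u
  simp only [Set.mem_range, Set.mem_ofPred_eq, twistedFundField_apply, eq_comm]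

end
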